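/- Fix r > −1/n and let C_n(r) ⊂ ℝ^N be the cone spanned by vectors u₁,…,u_n with ⟨u_i,u_j⟩ = 1+r (i=j) and r (i≠j). Then the polar cone of C_n(r), taken inside the linear hull L(C_n(r)), is isometric to C_n(−r/(1+nr)): there exists an orthogonal map O with O(C_n(r)° ∩ L(C_n(r))) = C_n(−r/(1+nr)). -/

import Mathlib

open Real

/-- The cone of nonnegative combinations of the vectors `u i`. -/
def posSpan {N : ℕ} {n : ℕ} (u : Fin n → EuclideanSpace ℝ (Fin N)) :
    Set (EuclideanSpace ℝ (Fin N)) :=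
  {x | ∃ α : Fin n → ℝ, (∀ i, 0 ≤ α i) ∧ x = ∑ i, α i • u i}

/-- The polar cone `D° = {x : ⟪x, y⟫ ≤ 0 for all y ∈ D}`. -/
def polarCone {N : ℕ} (D : Set (EuclideanSpace ℝ (Fin N))) :
    Set (EuclideanSpace ℝ (Fin N)) :=
  {x | ∀ y ∈ D, (inner ℝ x y : ℝ) ≤ 0}

/-- The polar cone of `C_n(r)`, taken inside the linear hull `L(C_n(r))`, is isometric
to `C_n(-r/(1+nr))`: there is an orthogonal map `O` and vectors `v` with Gram matrix
having diagonal `1 - r/(1+nr)` and off-diagonal `-r/(1+nr)` such that the image of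
`C_n(r)° ∩ L(C_n(r))` under `O` is the cone spanned by the `v i`. -/
theorem stmt15 (n N : ℕ) (hnN : n ≤ N) (r : ℝ) (hr : -1 / n < r)
    (u : Fin n → EuclideanSpace ℝ (Fin N))
    (hu : ∀ i j, (inner ℝ (u i) (u j) : ℝ) = if i = j then 1 + r else r) :
    ∃ (O : EuclideanSpace ℝ (Fin N) ≃ₗᵢ[ℝ] EuclideanSpace ℝ (Fin N))
      (v : Fin n → EuclideanSpace ℝ (Fin N)),
      (∀ i j, (inner ℝ (v i) (v j) : ℝ) =
        if i = j then 1 + -(r / (1 + n * r)) else -(r / (1 + n * r))) ∧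
      O '' (polarCone (posSpan u) ∩ (Submodule.span ℝ (posSpan u) : Set _)) = posSpan v := by
  have ht : 0 < 1 + (n : ℝ) * r := by
    rcases Nat.eq_zero_or_pos n with h | h
    · simp [h]
    · have hn : (0:ℝ) < n := by exact_mod_cast h
      rw [div_lt_iff₀ hn] at hr
      nlinarith
  set t : ℝ := 1 + (n : ℝ) * r with htdef
  have ht' : t ≠ 0 := ne_of_gt ht
  set S : EuclideanSpace ℝ (Fin N) := ∑ i, u i with hSdef
  have huS : ∀ j, (inner ℝ (u j) S : ℝ) = t := by
    intro j
    rw [hSdef, inner_sum]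
    have e : ∀ i : Fin n, (inner ℝ (u j) (u i) : ℝ) = r + (if j = i then 1 else 0) := by
      intro i; rw [hu]; split <;> ring
    rw [Finset.sum_congr rfl (fun i _ => e i), Finset.sum_add_distrib, Finset.sum_const,
      Finset.sum_ite_eq, if_pos (Finset.mem_univ j)]
    simp [htdef]
    ring
  have hSu : ∀ j, (inner ℝ S (u j) : ℝ) = t := fun j => by rw [real_inner_comm]; exact huS j
  have hSS : (inner ℝ S S : ℝ) = n * t := by
    rw [hSdef, sum_inner]
    simp only [← hSdef, huS]
    simp [Finset.card_univ]
  set v : Fin n → EuclideanSpace ℝ (Fin N) := fun j => (r/t) • S - u j with hvdef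
  have hvu : ∀ j k, (inner ℝ (v j) (u k) : ℝ) = if j = k then -1 else 0 := by
    intro j k
    rw [hvdef]
    simp only [inner_sub_left, real_inner_smul_left, hSu, hu]
    split <;> field_simp <;> ring
  have hvv : ∀ i j, (inner ℝ (v i) (v j) : ℝ) =
      if i = j then 1 + -(r / (1 + (n:ℝ) * r)) else -(r / (1 + (n:ℝ) * r)) := by
    intro i j
    rw [hvdef]
    simp only [inner_sub_left, inner_sub_right, real_inner_smul_left, real_inner_smul_right,
      hSu, huS, hSS, hu, ← htdef]
    split
    · field_simp; ring
    · field_simp; ring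
  have hu_mem : ∀ i, u i ∈ posSpan u := by
    intro i
    refine ⟨fun k => if k = i then 1 else 0, fun k => by by_cases h : k = i <;> simp [h], ?_⟩
    rw [Finset.sum_congr rfl (fun k _ => (ite_smul _ _ _ _ : _ = if k = i then (1:ℝ) • u k else (0:ℝ) • u k))]
    simp [Finset.sum_ite_eq']
  have huL : ∀ i, u i ∈ Submodule.span ℝ (posSpan u) :=
    fun i => Submodule.subset_span (hu_mem i)
  have hSL : S ∈ Submodule.span ℝ (posSpan u) :=
    Submodule.sum_mem _ (fun i _ => huL i)
  have hvL : ∀ j, v j ∈ Submodule.span ℝ (posSpan u) :=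
    fun j => sub_mem (Submodule.smul_mem _ _ hSL) (huL j)
  refine ⟨LinearIsometryEquiv.refl ℝ _, v, hvv, ?_⟩
  rw [LinearIsometryEquiv.coe_refl, Set.image_id]
  ext x
  constructor
  · rintro ⟨hpol, hspan⟩
    have hx : x ∈ Submodule.span ℝ (Set.range u) := by
      refine Submodule.span_le.2 ?_ hspan
      rintro y ⟨α, hα, rfl⟩
      exact Submodule.sum_mem _ (fun i _ =>
        Submodule.smul_mem _ _ (Submodule.subset_span (Set.mem_range_self i)))
    obtain ⟨c, hc⟩ := Submodule.mem_span_range_iff_exists_fun ℝ |>.1 hx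
    set C : ℝ := ∑ i, c i with hCdef
    have hxu : ∀ j, (inner ℝ x (u j) : ℝ) = c j + r * C := by
      intro j
      rw [← hc, sum_inner]
      have e : ∀ i : Fin n, (inner ℝ (c i • u i) (u j) : ℝ)
          = r * c i + (if i = j then c i else 0) := by
        intro i; rw [real_inner_smul_left, hu]; split <;> ring
      rw [Finset.sum_congr rfl (fun i _ => e i), Finset.sum_add_distrib,
        Finset.sum_ite_eq', if_pos (Finset.mem_univ j), ← Finset.mul_sum, ← hCdef]
      ring
    set β : Fin n → ℝ := fun j => -(c j + r * C) with hβdef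
    have hβ : ∀ j, 0 ≤ β j := by
      intro j
      have := hpol (u j) (hu_mem j)
      rw [hxu j] at this
      simp only [hβdef]
      linarith
    have hsumβ : ∑ j, β j = -(t * C) := by
      simp only [hβdef]
      rw [Finset.sum_neg_distrib, Finset.sum_add_distrib, Finset.sum_const, ← hCdef]
      simp [htdef]
      ring
    refine ⟨β, hβ, ?_⟩
    have key : ∑ j, β j • v j = x := by
      have e1 : ∀ j : Fin n, β j • v j
          = (β j * (r/t)) • S - ((-(c j)) • u j + (-(r*C)) • u j) := by
        intro j
        rw [hvdef]
        simp only [smul_sub, smul_smul, hβdef]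
        rw [← add_smul]
        congr 2
        ring
      rw [Finset.sum_congr rfl (fun j _ => e1 j), Finset.sum_sub_distrib,
        Finset.sum_add_distrib, ← Finset.sum_smul, ← Finset.sum_mul, hsumβ]
      have e2 : ∑ j, (-(c j)) • u j = -x := by
        rw [← hc, ← Finset.sum_neg_distrib]
        exact Finset.sum_congr rfl (fun j _ => by rw [neg_smul])
      have e3 : ∑ j : Fin n, (-(r*C)) • u j = (-(r*C)) • S := by
        rw [hSdef, Finset.smul_sum]
      have e4 : -(t * C) * (r / t) = -(r * C) := by field_simp
      rw [e2, e3, e4]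
      abel
    exact key.symm
  · rintro ⟨β, hβ, rfl⟩
    constructor
    · rintro y ⟨α, hα, rfl⟩
      rw [sum_inner]
      refine Finset.sum_nonpos (fun j _ => ?_)
      rw [real_inner_smul_left, inner_sum]
      refine mul_nonpos_of_nonneg_of_nonpos (hβ j) ?_
      refine Finset.sum_nonpos (fun k _ => ?_)
      rw [real_inner_smul_right, hvu]
      split
      · nlinarith [hα k]
      · simp
    · exact Submodule.sum_mem _ (fun j _ => Submodule.smul_mem _ _ (hvL j))
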